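/- Let b₀, b₁, …, b_m be integers with |b_i| ≥ 2 for i = 1, …, m. Then the value of the finite continued fraction [b₀,b₁,…,b_m] = b₀ − 1/(b₁ − 1/(⋯ − 1/b_m)) is a rational number, and writing it in lowest terms as c/d with d > 0 and gcd(c,d) = 1, one has m < d. -/

import Mathlib

open Filter Topology OnePoint

/-- The Möbius map `z ↦ b - 1/z` on the one-point compactification `ℝ∞` of `ℝ`. -/
noncomputable def mob (b : ℤ) (z : OnePoint ℝ) : OnePoint ℝ :=
  Option.elim z ((b : ℝ) : OnePoint ℝ)
    (fun x => if x = 0 then (∞ : OnePoint ℝ) else (((b : ℝ) - 1 / x : ℝ) : OnePoint ℝ))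

/-- Value of a finite continued fraction `[b₀, …, b_m]`, i.e. `s₀(s₁(⋯ s_m(∞)))`. -/
noncomputable def cfVal : List ℤ → OnePoint ℝ
  | [] => ∞
  | b :: t => mob b (cfVal t)

/-- The `n`th convergent `v_n = S_n(∞)` of the continued fraction `[b₀, b₁, …]`. -/
noncomputable def cfConv (b : ℕ → ℤ) (n : ℕ) : OnePoint ℝ :=
  cfVal ((List.range (n + 1)).map b)

/-- `m` is a positive index at which the coefficient is `0`, `1` or `-1`. -/
def badIdx (b : ℕ → ℤ) (m : ℕ) : Prop :=
  1 ≤ m ∧ (b m = 0 ∨ b m = 1 ∨ b m = -1)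

instance (b : ℕ → ℤ) : DecidablePred (badIdx b) := fun m => by
  unfold badIdx; infer_instance

-- The singularization map `Φ` on integer sequences.
open Classical in
noncomputable def Phi (b : ℕ → ℤ) : ℕ → ℤ :=
  if h : ∃ m, badIdx b m then
    let m := Nat.find h
    if b m = 0 then
      fun k => if k + 1 < m then b k
        else if k = m - 1 then b (m - 1) + b (m + 1)
        else b (k + 2)
    else if b m = 1 then
      fun k => if k + 1 < m then b k
        else if k = m - 1 then b (m - 1) - 1
        else if k = m then b (m + 1) - 1
        else b (k + 1)
    else
      fun k => if k + 1 < m then b k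
        else if k = m - 1 then b (m - 1) + 1
        else if k = m then b (m + 1) + 1
        else b (k + 1)
  else b

-- `p(b) ∈ ℕ ∪ {∞}`: the least positive index at which `0`, `1` or `-1` occurs.
open Classical in
noncomputable def pIdx (b : ℕ → ℤ) : ℕ∞ :=
  if h : ∃ m, badIdx b m then (Nat.find h : ℕ∞) else ⊤

/-- `p⁽ⁿ⁾ → ∞` as `n → ∞`. -/
def PTendsToTop (b : ℕ → ℤ) : Prop :=
  ∀ N : ℕ, ∃ M : ℕ, ∀ n ≥ M, (N : ℕ∞) < pIdx (Phi^[n] b)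

/-- `p = liminf pⁿ`, as a natural number (junk value if the liminf is `∞`). -/
noncomputable def pLim (b : ℕ → ℤ) : ℕ :=
  (Filter.liminf (fun n => pIdx (Phi^[n] b)) Filter.atTop).toNat

/-- `q⁽ⁿ⁾ = |b⁽ⁿ⁾_{p-1}|`. -/
noncomputable def qSeq (b : ℕ → ℤ) (n : ℕ) : ℕ :=
  ((Phi^[n] b) (pLim b - 1)).natAbs

/-- Two continued fractions have the same tail. -/
def SameTail (b c : ℕ → ℤ) : Prop := ∃ r s : ℕ, ∀ k : ℕ, b (r + k) = c (s + k)

/-- `bstar` is the limit continued fraction: each coefficient of `Φⁿ(b)` stabilises on it. -/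
def EventuallyCoeff (b bstar : ℕ → ℤ) : Prop :=
  ∀ k : ℕ, ∃ N : ℕ, ∀ n ≥ N, Phi^[n] b k = bstar k

/-- The point of `ℝ∞` represented by the integer fraction `a/b` (`∞` when `b = 0`). -/
noncomputable def intPt (a b : ℤ) : OnePoint ℝ :=
  if b = 0 then ∞ else (((a : ℝ) / (b : ℝ)) : OnePoint ℝ)

/-- Adjacency in the Farey graph: `x = a/b`, `y = c/d` with `ad - bc = ±1`. -/
def FareyAdj (x y : OnePoint ℝ) : Prop :=
  ∃ a b c d : ℤ, x = intPt a b ∧ y = intPt c d ∧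
    (a * d - b * c = 1 ∨ a * d - b * c = -1)

/-- `x` is an extended rational, i.e. a member of `ℚ∞ = ℚ ∪ {∞} ⊆ ℝ∞`. -/
def IsExtRat (x : OnePoint ℝ) : Prop :=
  x = ∞ ∨ ∃ q : ℚ, x = ((q : ℝ) : OnePoint ℝ)

-- One step of the index-tracking sequence, for the current coefficient sequence `c`.
open Classical in
noncomputable def eStep (c : ℕ → ℤ) (e : ℕ) : Option ℕ :=
  if h : ∃ m, badIdx c m then
    let m := Nat.find h
    if c m = 0 then
      if e + 2 ≤ m then Option.some e
      else if e = m - 1 ∨ e = m then (none : Option ℕ)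
      else Option.some (e - 2)
    else
      if e + 2 ≤ m then Option.some e
      else if e = m - 1 then (none : Option ℕ)
      else Option.some (e - 1)
  else Option.some e

/-- The index-tracking sequence `e⁽⁰⁾(k), e⁽¹⁾(k), …` (`none` once it has terminated). -/
noncomputable def eSeq (b : ℕ → ℤ) (k : ℕ) : ℕ → Option ℕ
  | 0 => Option.some k
  | n + 1 => (eSeq b k n).bind (eStep (Phi^[n] b))

/-!
Write `[b₀, …, b_m] = N/D`, where `(N, D)` is obtained from the tail by `(N, D) ↦ (b N - D, N)`
starting from `∞ = 1/0`, mirroring `b - 1/(N/D) = (b N - D)/N`. The step preserves coprimality,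
so the fraction is reduced. When `|b| ≥ 2`, `|b N - D| ≥ 2|N| - |D| > |N|`, so `|D| < |N|`
persists and `|N|` grows by at least one per coefficient. The denominator of `[b₀, …, b_m]` is
the numerator of `[b₁, …, b_m]`, whose absolute value therefore exceeds `m`.
-/

def cfNumDen : List ℤ → ℤ × ℤ
  | [] => (1, 0)
  | c :: t => (c * (cfNumDen t).1 - (cfNumDen t).2, (cfNumDen t).1)

lemma isCoprime_cfNumDen : ∀ l : List ℤ, IsCoprime (cfNumDen l).1 (cfNumDen l).2
  | [] => isCoprime_one_left
  | c :: t => by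
    have h := (isCoprime_cfNumDen t).symm.neg_left.add_mul_right_left c
    rwa [neg_add_eq_sub] at h

lemma intPt_neg_neg (a b : ℤ) : intPt (-a) (-b) = intPt a b := by
  simp [intPt, neg_div_neg_eq]

lemma mob_infty (c : ℤ) : mob c ∞ = ((c : ℝ) : OnePoint ℝ) := rfl

lemma mob_coe (c : ℤ) (x : ℝ) :
    mob c (x : OnePoint ℝ) = if x = 0 then ∞ else (((c : ℝ) - 1 / x : ℝ) : OnePoint ℝ) := rfl

lemma mob_intPt (c : ℤ) {N D : ℤ} (hND : IsCoprime N D) :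
    mob c (intPt N D) = intPt (c * N - D) N := by
  by_cases hD : D = 0
  · subst hD
    rcases Int.isUnit_iff.mp (isCoprime_zero_right.mp hND) with rfl | rfl <;>
      simp [intPt, mob_infty]
  · by_cases hN : N = 0
    · simp [intPt, mob_coe, hN, hD]
    · have hNr : (N : ℝ) ≠ 0 := by exact_mod_cast hN
      have hDr : (D : ℝ) ≠ 0 := by exact_mod_cast hD
      rw [intPt, if_neg hD, mob_coe, if_neg (div_ne_zero hNr hDr), intPt, if_neg hN]
      congr 1
      push_cast
      field_simp

lemma cfVal_eq_intPt : ∀ l : List ℤ, cfVal l = intPt (cfNumDen l).1 (cfNumDen l).2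
  | [] => by simp [cfVal, cfNumDen, intPt]
  | c :: t => by
    rw [cfVal, cfVal_eq_intPt t, mob_intPt c (isCoprime_cfNumDen t)]
    rfl

lemma abs_cfNumDen_fst_succ_le (c : ℤ) (t : List ℤ) (hc : 2 ≤ |c|)
    (ht : |(cfNumDen t).2| < |(cfNumDen t).1|) :
    |(cfNumDen t).1| + 1 ≤ |(cfNumDen (c :: t)).1| := by
  have h2 : 2 * |(cfNumDen t).1| ≤ |c| * |(cfNumDen t).1| :=
    mul_le_mul_of_nonneg_right hc (abs_nonneg _)
  have hsub := abs_sub_abs_le_abs_sub (c * (cfNumDen t).1) (cfNumDen t).2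
  rw [abs_mul] at hsub
  simp only [cfNumDen]
  linarith

lemma abs_cfNumDen_snd_lt_fst :
    ∀ l : List ℤ, (∀ x ∈ l, 2 ≤ |x|) → |(cfNumDen l).2| < |(cfNumDen l).1|
  | [] => fun _ => by simp [cfNumDen]
  | c :: t => fun h => by
    have ht := abs_cfNumDen_snd_lt_fst t fun x hx => h x (List.mem_cons_of_mem c hx)
    have := abs_cfNumDen_fst_succ_le c t (h c List.mem_cons_self) ht
    simp only [cfNumDen] at this ⊢
    linarith

lemma length_lt_abs_cfNumDen_fst :
    ∀ l : List ℤ, (∀ x ∈ l, 2 ≤ |x|) → (l.length : ℤ) < |(cfNumDen l).1|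
  | [] => fun _ => by simp [cfNumDen]
  | c :: t => fun h => by
    have ht : ∀ x ∈ t, 2 ≤ |x| := fun x hx => h x (List.mem_cons_of_mem c hx)
    have := abs_cfNumDen_fst_succ_le c t (h c List.mem_cons_self) (abs_cfNumDen_snd_lt_fst t ht)
    have := length_lt_abs_cfNumDen_fst t ht
    push_cast [List.length_cons]
    linarith

lemma exists_rat_intPt_eq {a b : ℤ} (hab : IsCoprime a b) (hb : b ≠ 0) :
    ∃ q : ℚ, intPt a b = ((q : ℝ) : OnePoint ℝ) ∧ q.den = b.natAbs := by
  wlog hb0 : 0 < b generalizing a b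
  · rw [← intPt_neg_neg, ← Int.natAbs_neg b]
    exact this hab.neg_neg (neg_ne_zero.mpr hb) (by omega)
  refine ⟨a / b, by simp [intPt, hb], ?_⟩
  have hden := Rat.den_div_eq_of_coprime hb0 (Int.isCoprime_iff_gcd_eq_one.mp hab)
  omega

/-- **Lemma 4.** If `|bᵢ| ≥ 2` for `i = 1, …, m`, then the finite continued fraction
`[b₀, b₁, …, b_m]` is a rational `c/d` in lowest terms with `m < d`. -/
theorem stmt10 (b : ℕ → ℤ) (m : ℕ) (hb : ∀ i : ℕ, 1 ≤ i → i ≤ m → 2 ≤ |b i|) :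
    ∃ q : ℚ, cfConv b m = ((q : ℝ) : OnePoint ℝ) ∧ m < q.den := by
  set tail := (List.range m).map (fun i => b (i + 1))
  have hlist : (List.range (m + 1)).map b = b 0 :: tail := by
    rw [List.range_succ_eq_map, List.map_cons, List.map_map]
    rfl
  have hden : (m : ℤ) < |(cfNumDen (b 0 :: tail)).2| := by
    have h := length_lt_abs_cfNumDen_fst tail (by
      simp only [tail, List.mem_map, List.mem_range]
      rintro _ ⟨i, hi, rfl⟩
      exact hb (i + 1) (Nat.le_add_left 1 i) hi)
    rwa [List.length_map, List.length_range] at h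
  obtain ⟨q, hq, hqden⟩ := exists_rat_intPt_eq (isCoprime_cfNumDen (b 0 :: tail))
    (by rintro h0; rw [h0, abs_zero] at hden; omega)
  refine ⟨q, by rw [cfConv, hlist, cfVal_eq_intPt, hq], ?_⟩
  rw [Int.abs_eq_natAbs] at hden
  omega
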